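/- Let X be an infinite Hausdorff topological space, 𝓑 a bornology on X, and let Φ ∈ {Ω, Γ}, where Φ̃↑_𝓑 denotes 𝒟↑_𝓑(USC*(X)) if Φ = Ω and 𝒮↑_𝓑(USC*(X)) if Φ = Γ. Assume that C*(X) is countably dense in ⟨USC*(X), τ_𝓑⟩, i.e., for every f ∈ USC*(X) there is a countable set G of bounded continuous functions with f in the τ_𝓑-closure of G. Then the following are equivalent: (a) ⟨USC*(X), τ_𝓑⟩ satisfies S₁(Φ̃↑_𝓑, 𝒟(USC*(X))); (b) ⟨USC*(X), τ_𝓑⟩ is separable and X satisfies S₁(Φ_𝓑(X), Ω_𝓑(X)); (c) ⟨USC*(X), τ_𝓑⟩ is separable and satisfies S₁(Φ_{0,𝓑}(USC*(X)), Ω_{0,𝓑}(USC*(X))), where 0 is the constant zero function; (d) ⟨USC*(X), τ_𝓑⟩ is separable and satisfies S₁(Φ̃↑_𝓑, Ω_{0,𝓑}(USC*(X))). -/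

import Mathlib

open Set Filter Topology

/-- A bornology in the sense of the paper: a proper ideal of subsets of `X`
(nonempty, downward closed, closed under binary unions, `X ∉ 𝓑`) whose union is `X`. -/
def IsPBornology {X : Type*} (𝓑 : Set (Set X)) : Prop :=
  𝓑.Nonempty ∧ (∀ A B : Set X, A ⊆ B → B ∈ 𝓑 → A ∈ 𝓑) ∧
    (∀ A B : Set X, A ∈ 𝓑 → B ∈ 𝓑 → A ∪ B ∈ 𝓑) ∧
    (Set.univ : Set X) ∉ 𝓑 ∧ ⋃₀ 𝓑 = Set.univ

/-- `USC*(X)`: bounded upper semicontinuous real functions on `X`. -/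
def USCb (X : Type*) [TopologicalSpace X] : Set (X → ℝ) :=
  {f | (∀ a : ℝ, IsOpen {x | f x < a}) ∧ ∃ M : ℝ, ∀ x, |f x| ≤ M}

/-- `C*(X)`: bounded continuous real functions on `X`. -/
def Cb (X : Type*) [TopologicalSpace X] : Set (X → ℝ) :=
  {f | Continuous f ∧ ∃ M : ℝ, ∀ x, |f x| ≤ M}

/-- `C(X)`: continuous real functions on `X`. -/
def ContFns (X : Type*) [TopologicalSpace X] : Set (X → ℝ) := {f | Continuous f}

/-- Basic `τ_𝓑`-neighborhood `N_{B,ε}(h)`. -/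
def Nbhd {X : Type*} (B : Set X) (ε : ℝ) (h : X → ℝ) : Set (X → ℝ) :=
  {f | ∀ x ∈ B, |h x - f x| < ε}

/-- The topology `τ_𝓑` on `ℝ^X` of uniform convergence on members of `𝓑`. -/
def tauB {X : Type*} (𝓑 : Set (Set X)) : TopologicalSpace (X → ℝ) :=
  TopologicalSpace.generateFrom
    {S | ∃ (h : X → ℝ) (B : Set X) (ε : ℝ), B ∈ 𝓑 ∧ 0 < ε ∧ S = Nbhd B ε h}

/-- The ball `𝔹(B,V)` about `B` of radius an entourage `V`. -/
def UBall {X : Type*} (B : Set X) (V : Set (X × X)) : Set X :=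
  {x | ∃ y ∈ B, (x, y) ∈ V}

/-- Basic `τ_𝓑ˢ`-neighborhood `Nˢ_{B,ε}(h)`. -/
def NbhdS {X : Type*} [UniformSpace X] (B : Set X) (ε : ℝ) (h : X → ℝ) : Set (X → ℝ) :=
  {f | ∃ V ∈ uniformity X, ∀ x ∈ UBall B V, |h x - f x| < ε}

/-- The topology `τ_𝓑ˢ` on `ℝ^X`. -/
def tauBs {X : Type*} [UniformSpace X] (𝓑 : Set (Set X)) : TopologicalSpace (X → ℝ) :=
  TopologicalSpace.generateFrom
    {S | ∃ (h : X → ℝ) (B : Set X) (ε : ℝ), B ∈ 𝓑 ∧ 0 < ε ∧ S = NbhdS B ε h}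

/-- The selection principle `S₁(𝒜, ℬ)`. -/
def S1 {α : Type*} (𝒜 ℬ : Set (Set α)) : Prop :=
  ∀ u : ℕ → Set α, (∀ n, u n ∈ 𝒜) → ∃ s : ℕ → α, (∀ n, s n ∈ u n) ∧ Set.range s ∈ ℬ

/-- `𝒰` is an open cover of `X`. -/
def IsOCover {X : Type*} [TopologicalSpace X] (𝒰 : Set (Set X)) : Prop :=
  (∀ U ∈ 𝒰, IsOpen U) ∧ ⋃₀ 𝒰 = Set.univ

/-- `𝒪(X)`: all open covers of `X`. -/
def OCovers (X : Type*) [TopologicalSpace X] : Set (Set (Set X)) := {𝒰 | IsOCover 𝒰}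

/-- `Ω_𝓑(X)`: all open `𝓑`-ω-covers of `X`. -/
def BOmegaCovers {X : Type*} [TopologicalSpace X] (𝓑 : Set (Set X)) : Set (Set (Set X)) :=
  {𝒰 | IsOCover 𝒰 ∧ Set.univ ∉ 𝒰 ∧ ∀ B ∈ 𝓑, ∃ U ∈ 𝒰, B ⊆ U}

/-- `Γ_𝓑(X)`: all open `𝓑`-γ-covers of `X`. -/
def BGammaCovers {X : Type*} [TopologicalSpace X] (𝓑 : Set (Set X)) : Set (Set (Set X)) :=
  {𝒰 | IsOCover 𝒰 ∧ 𝒰.Infinite ∧ ∀ B ∈ 𝓑, {U ∈ 𝒰 | ¬ B ⊆ U}.Finite}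

/-- `Ω^s_𝓑(X)`: all open strong `𝓑`-ω-covers of `X`. -/
def BOmegaSCovers {X : Type*} [UniformSpace X] (𝓑 : Set (Set X)) : Set (Set (Set X)) :=
  {𝒰 | IsOCover 𝒰 ∧ Set.univ ∉ 𝒰 ∧ ∀ B ∈ 𝓑, ∃ U ∈ 𝒰, ∃ V ∈ uniformity X, UBall B V ⊆ U}

/-- `Γ^s_𝓑(X)`: all open strong `𝓑`-γ-covers of `X`. -/
def BGammaSCovers {X : Type*} [UniformSpace X] (𝓑 : Set (Set X)) : Set (Set (Set X)) :=
  {𝒰 | IsOCover 𝒰 ∧ 𝒰.Infinite ∧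
    ∀ B ∈ 𝓑, {U ∈ 𝒰 | ¬ ∃ V ∈ uniformity X, UBall B V ⊆ U}.Finite}

/-- `B` and the complement of `U` are functionally separated. -/
def FunSep {X : Type*} [TopologicalSpace X] (B U : Set X) : Prop :=
  ∃ f : X → ℝ, Continuous f ∧ (∀ x ∈ B, f x = 0) ∧ ∀ x ∈ Uᶜ, f x = 1

/-- `Ω_{𝓑^f}(X)`: all open functionally separated `𝓑`-ω-covers of `X`. -/
def BfOmegaCovers {X : Type*} [TopologicalSpace X] (𝓑 : Set (Set X)) : Set (Set (Set X)) :=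
  {𝒰 | IsOCover 𝒰 ∧ ∀ B ∈ 𝓑, ∃ U ∈ 𝒰, FunSep B U}

/-- `Γ_{𝓑^f}(X)`: all open functionally separated `𝓑`-γ-covers of `X`. -/
def BfGammaCovers {X : Type*} [TopologicalSpace X] (𝓑 : Set (Set X)) : Set (Set (Set X)) :=
  {𝒰 | IsOCover 𝒰 ∧ 𝒰.Infinite ∧ ∀ B ∈ 𝓑, {U ∈ 𝒰 | ¬ FunSep B U}.Finite}

/-- The bornology `Fin` of finite subsets. -/
def FinB (X : Type*) : Set (Set X) := {B | B.Finite}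

/-- `𝒟(H)`: subsets of `H` dense in `H` w.r.t. the topology `t`. -/
def DFam {X : Type*} (t : TopologicalSpace (X → ℝ)) (H : Set (X → ℝ)) : Set (Set (X → ℝ)) :=
  {F | F ⊆ H ∧ H ⊆ @closure _ t F}

/-- `𝒮(H)`: subsets of `H` sequentially dense in `H` w.r.t. the topology `t`. -/
def SFam {X : Type*} (t : TopologicalSpace (X → ℝ)) (H : Set (X → ℝ)) : Set (Set (X → ℝ)) :=
  {F | F ⊆ H ∧ ∀ h ∈ H, ∃ s : ℕ → X → ℝ, (∀ n, s n ∈ F) ∧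
    Filter.Tendsto s Filter.atTop (@nhds _ t h)}

/-- `𝒫(H)`: pointwise dense subsets of `H`. -/
def PFam {X : Type*} (H : Set (X → ℝ)) : Set (Set (X → ℝ)) :=
  {F | F ⊆ H ∧ ∀ h ∈ H, ∀ x : X, h x ∈ closure {y : ℝ | ∃ f ∈ F, f x = y}}

/-- `𝒟↑(H)`: upper dense subsets of `H` w.r.t. the topology `t`. -/
def UpperDenseFam {X : Type*} (t : TopologicalSpace (X → ℝ)) (H : Set (X → ℝ)) :
    Set (Set (X → ℝ)) :=
  {F | F ⊆ H ∧ ∀ f ∈ H, {h | h ∈ H ∧ f ≤ h} ⊆ @closure _ t {h | h ∈ F ∧ f ≤ h ∧ h - f ∈ H}}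

/-- `𝒮↑(H)`: upper sequentially dense subsets of `H` w.r.t. the topology `t`. -/
def UpperSeqDenseFam {X : Type*} (t : TopologicalSpace (X → ℝ)) (H : Set (X → ℝ)) :
    Set (Set (X → ℝ)) :=
  {F | F ⊆ H ∧ ∀ f ∈ H, ∃ s : ℕ → X → ℝ,
    (∀ n, s n ∈ F ∧ f ≤ s n ∧ s n - f ∈ H) ∧
    Filter.Tendsto s Filter.atTop (@nhds _ t f)}

/-- `H` is separable w.r.t. the topology `t`. -/
def SeparableIn {X : Type*} (t : TopologicalSpace (X → ℝ)) (H : Set (X → ℝ)) : Prop :=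
  ∃ D : Set (X → ℝ), D.Countable ∧ D ∈ DFam t H

/-- `H` is sequentially separable w.r.t. the topology `t`. -/
def SeqSeparableIn {X : Type*} (t : TopologicalSpace (X → ℝ)) (H : Set (X → ℝ)) : Prop :=
  ∃ D : Set (X → ℝ), D.Countable ∧ D ∈ SFam t H

/-- Property `(𝒪_h)`. -/
def PropO {X : Type*} (F : Set (X → ℝ)) (h : X → ℝ) : Prop :=
  ∀ x : X, h x ∈ closure {y : ℝ | ∃ f ∈ F, f x = y}

/-- Property `(Ω_h)_𝓑`. -/
def PropOmega {X : Type*} (𝓑 : Set (Set X)) (F : Set (X → ℝ)) (h : X → ℝ) : Prop :=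
  h ∉ F ∧ h ∈ @closure _ (tauB 𝓑) F

/-- Property `(Γ_h)_𝓑`. -/
def PropGamma {X : Type*} (𝓑 : Set (Set X)) (F : Set (X → ℝ)) (h : X → ℝ) : Prop :=
  F.Infinite ∧ ∀ ε : ℝ, 0 < ε → ∀ B ∈ 𝓑, {f ∈ F | ∃ x ∈ B, ε ≤ |f x - h x|}.Finite

/-- `𝒪_{h,𝓑}(H)`. -/
def OFam {X : Type*} (h : X → ℝ) (H : Set (X → ℝ)) : Set (Set (X → ℝ)) :=
  {F | F ⊆ H ∧ PropO F h ∧ ∀ f ∈ F, h ≤ f ∧ f - h ∈ H}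

/-- `Ω_{h,𝓑}(H)`. -/
def OmegaFam {X : Type*} (𝓑 : Set (Set X)) (h : X → ℝ) (H : Set (X → ℝ)) :
    Set (Set (X → ℝ)) :=
  {F | F ⊆ H ∧ PropOmega 𝓑 F h ∧ ∀ f ∈ F, h ≤ f ∧ f - h ∈ H}

/-- `Γ_{h,𝓑}(H)`. -/
def GammaFam {X : Type*} (𝓑 : Set (Set X)) (h : X → ℝ) (H : Set (X → ℝ)) :
    Set (Set (X → ℝ)) :=
  {F | F ⊆ H ∧ PropGamma 𝓑 F h ∧ ∀ f ∈ F, h ≤ f ∧ f - h ∈ H}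

open Classical in
/-- The function `f_{U,g}`. -/
noncomputable def fUg {X : Type*} (U : Set X) (g : X → ℝ) : X → ℝ :=
  fun x => if x ∈ U then g x else g x + 1 + ⨆ y, |g y|

/-- The family `S(𝒰)`. -/
def SU {X : Type*} [TopologicalSpace X] (𝒰 : Set (Set X)) : Set (X → ℝ) :=
  {f | ∃ U ∈ 𝒰, ∃ g ∈ USCb X, f = fUg U g}

/-- `Ψ_𝓑(X)` for `Ψ = 𝒪, Ω, Γ` coded by `0, 1, 2 : Fin 3`. -/
def covFam (X : Type*) [TopologicalSpace X] (𝓑 : Set (Set X)) (i : Fin 3) :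
    Set (Set (Set X)) :=
  if i = 0 then OCovers X else if i = 1 then BOmegaCovers 𝓑 else BGammaCovers 𝓑

/-- `Ψ_{h,𝓑}(H)` for `Ψ = 𝒪, Ω, Γ` coded by `0, 1, 2 : Fin 3`. -/
def funFam {X : Type*} (𝓑 : Set (Set X)) (h : X → ℝ) (H : Set (X → ℝ)) (i : Fin 3) :
    Set (Set (X → ℝ)) :=
  if i = 0 then OFam h H else if i = 1 then OmegaFam 𝓑 h H else GammaFam 𝓑 h H

/-- `H` (as a subspace w.r.t. the topology `t`) is Fréchet–Urysohn. -/
def FUOn {X : Type*} (t : TopologicalSpace (X → ℝ)) (H : Set (X → ℝ)) : Prop :=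
  ∀ A : Set (X → ℝ), A ⊆ H → ∀ y ∈ H, y ∈ @closure _ t A →
    ∃ s : ℕ → X → ℝ, (∀ n, s n ∈ A) ∧ Filter.Tendsto s Filter.atTop (@nhds _ t y)

/-- `H` (as a subspace w.r.t. the topology `t`) is strictly Fréchet–Urysohn. -/
def SFUOn {X : Type*} (t : TopologicalSpace (X → ℝ)) (H : Set (X → ℝ)) : Prop :=
  ∀ y ∈ H, ∀ A : ℕ → Set (X → ℝ), (∀ n, A n ⊆ H) → (∀ n, y ∈ @closure _ t (A n)) →
    ∃ s : ℕ → X → ℝ, (∀ n, s n ∈ A n) ∧ Filter.Tendsto s Filter.atTop (@nhds _ t y)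

/-!
Countable density of `C*(X)` in `USC*(X)` makes every `B ∈ 𝓑` a discrete subset of `X`, so every
bounded nonnegative function on `B` extends to a bounded upper semicontinuous function on `X`.
This yields upper density of `USC*(X)` and of the families `{f_{U,g}}`, and, once `USC*(X)` is
separable, it forces every member of `𝓑` to be finite; then `τ_𝓑`-closeness to `0` is
controlled by single balls `N_{B,δ}(0)`.

Covers are turned into function families by `U ↦ f_{U,g}` or `U ↦ 1_{Uᶜ}`, both `≥ 1` off `U`,
and function families into covers by the sublevel sets `{w < 1/(q+1)}`; a selection from the
sublevel covers is made small on each `B` by the `B*`-trick. For (d) ⇒ (a) the selection is run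
once for each translate by a member of a countable dense set.
-/

namespace IsPBornology

variable {X : Type*} {𝓑 : Set (Set X)}

theorem subset_mem (h𝓑 : IsPBornology 𝓑) {A B : Set X} (hAB : A ⊆ B) (hB : B ∈ 𝓑) : A ∈ 𝓑 :=
  h𝓑.2.1 A B hAB hB

theorem union_mem (h𝓑 : IsPBornology 𝓑) {A B : Set X} (hA : A ∈ 𝓑) (hB : B ∈ 𝓑) :
    A ∪ B ∈ 𝓑 :=
  h𝓑.2.2.1 A B hA hB

theorem singleton_mem (h𝓑 : IsPBornology 𝓑) (x : X) : {x} ∈ 𝓑 := by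
  obtain ⟨B, hB, hxB⟩ := mem_sUnion.1 (h𝓑.2.2.2.2.symm ▸ mem_univ x)
  exact h𝓑.subset_mem (singleton_subset_iff.2 hxB) hB

theorem finite_mem (h𝓑 : IsPBornology 𝓑) {B : Set X} (hB : B.Finite) : B ∈ 𝓑 := by
  induction B, hB using Set.Finite.induction_on with
  | empty => exact h𝓑.subset_mem (empty_subset _) h𝓑.1.some_mem
  | insert _ _ ih => exact insert_eq _ _ ▸ h𝓑.union_mem (h𝓑.singleton_mem _) ih

end IsPBornology

section TauB

variable {X : Type*} {𝓑 : Set (Set X)}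

theorem isOpen_nbhd {B : Set X} (hB : B ∈ 𝓑) {ε : ℝ} (hε : 0 < ε) (h : X → ℝ) :
    IsOpen[tauB 𝓑] (Nbhd B ε h) :=
  TopologicalSpace.isOpen_generateFrom_of_mem ⟨h, B, ε, hB, hε, rfl⟩

theorem mem_nbhd_self (B : Set X) {ε : ℝ} (hε : 0 < ε) (h : X → ℝ) : h ∈ Nbhd B ε h :=
  fun _ _ => by simpa using hε

theorem exists_mem_nbhd_of_mem_closure {A : Set (X → ℝ)} {w : X → ℝ}
    (hw : w ∈ closure[tauB 𝓑] A) {B : Set X} (hB : B ∈ 𝓑) {ε : ℝ} (hε : 0 < ε) :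
    ∃ a ∈ A, a ∈ Nbhd B ε w := by
  let := tauB 𝓑
  obtain ⟨a, ha, haA⟩ := mem_closure_iff.1 hw _ (isOpen_nbhd hB hε w) (mem_nbhd_self B hε w)
  exact ⟨a, haA, ha⟩

theorem Filter.Tendsto.eventually_mem_nbhd {ι : Type*} {l : Filter ι} {s : ι → X → ℝ}
    {f : X → ℝ} (hs : Tendsto s l (@nhds _ (tauB 𝓑) f)) {B : Set X} (hB : B ∈ 𝓑) {ε : ℝ}
    (hε : 0 < ε) : ∀ᶠ i in l, s i ∈ Nbhd B ε f :=
  hs (@IsOpen.mem_nhds _ (tauB 𝓑) _ _ (isOpen_nbhd hB hε f) (mem_nbhd_self B hε f))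

/-- The subbasic sets of `tauB 𝓑` are not centred at their points, so for infinite `B` a
neighbourhood of `w` need not contain any `Nbhd B δ w`. -/
theorem exists_eqOn_subset_of_mem_nhds (h𝓑 : IsPBornology 𝓑) {w : X → ℝ} {N : Set (X → ℝ)}
    (hN : N ∈ @nhds _ (tauB 𝓑) w) : ∃ B ∈ 𝓑, {g | EqOn g w B} ⊆ N := by
  have hle : ⨅ B ∈ 𝓑, 𝓟 {g : X → ℝ | EqOn g w B} ≤ @nhds _ (tauB 𝓑) w := by
    rw [tauB, TopologicalSpace.nhds_generateFrom]
    refine le_iInf₂ fun _ ⟨hws, h, B, ε, hB, _, hs⟩ => ?_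
    subst hs
    refine iInf₂_le_of_le B hB (principal_mono.2 fun g hg x hx => ?_)
    simpa [hg hx] using hws x hx
  refine (mem_biInf_of_directed ?_ h𝓑.1).1 (hle hN)
  exact fun B₁ h₁ B₂ h₂ => ⟨B₁ ∪ B₂, h𝓑.union_mem h₁ h₂,
    principal_mono.2 fun _ hg => hg.mono subset_union_left,
    principal_mono.2 fun _ hg => hg.mono subset_union_right⟩

theorem mem_closure_of_forall_eqOn (h𝓑 : IsPBornology 𝓑) {A : Set (X → ℝ)} {w : X → ℝ}
    (H : ∀ B ∈ 𝓑, ∃ a ∈ A, EqOn a w B) : w ∈ closure[tauB 𝓑] A := by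
  let := tauB 𝓑
  refine mem_closure_iff_nhds.2 fun N hN => ?_
  obtain ⟨B, hB, hBN⟩ := exists_eqOn_subset_of_mem_nhds h𝓑 hN
  obtain ⟨a, haA, ha⟩ := H B hB
  exact ⟨a, hBN ha, haA⟩

theorem tendsto_of_forall_eventually_eqOn (h𝓑 : IsPBornology 𝓑) {ι : Type*} {l : Filter ι}
    {s : ι → X → ℝ} {f : X → ℝ} (H : ∀ B ∈ 𝓑, ∀ᶠ i in l, EqOn (s i) f B) :
    Tendsto s l (@nhds _ (tauB 𝓑) f) := fun _ hN =>
  let ⟨B, hB, hBN⟩ := exists_eqOn_subset_of_mem_nhds h𝓑 hN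
  (H B hB).mono fun _ hi => hBN hi

theorem Set.Finite.exists_nbhd_subset {B : Set X} (hB : B.Finite) {ε : ℝ} {h w : X → ℝ}
    (hw : w ∈ Nbhd B ε h) : ∃ δ > 0, Nbhd B δ w ⊆ Nbhd B ε h := by
  have hsmall : ∀ᶠ δ in 𝓝 (0 : ℝ), ∀ x ∈ B, |h x - w x| + δ < ε := by
    refine hB.eventually_all.2 fun x hx => ?_
    exact (tendsto_const_nhds.add tendsto_id).eventually_lt_const (by simpa using hw x hx)
  obtain ⟨δ, hδ, hδ0⟩ :=
    ((hsmall.filter_mono nhdsWithin_le_nhds).and (self_mem_nhdsWithin (s := Ioi 0))).exists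
  refine ⟨δ, hδ0, fun g hg x hx => ?_⟩
  calc |h x - g x| ≤ |h x - w x| + |w x - g x| := abs_sub_le _ _ _
    _ < ε := by linarith [hg x hx, hδ x hx]

theorem exists_nbhd_subset_of_mem_nhds (h𝓑 : IsPBornology 𝓑) (hfin : ∀ B ∈ 𝓑, B.Finite)
    {w : X → ℝ} {N : Set (X → ℝ)} (hN : N ∈ @nhds _ (tauB 𝓑) w) :
    ∃ B ∈ 𝓑, ∃ δ > 0, Nbhd B δ w ⊆ N := by
  have hle : ⨅ p ∈ 𝓑 ×ˢ Ioi (0 : ℝ), 𝓟 (Nbhd p.1 p.2 w) ≤ @nhds _ (tauB 𝓑) w := by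
    rw [tauB, TopologicalSpace.nhds_generateFrom]
    refine le_iInf₂ fun _ ⟨hws, h, B, ε, hB, _, hs⟩ => ?_
    subst hs
    obtain ⟨δ, hδ, hsub⟩ := (hfin B hB).exists_nbhd_subset hws
    exact iInf₂_le_of_le (B, δ) ⟨hB, hδ⟩ (principal_mono.2 hsub)
  have hdir : DirectedOn ((fun p : Set X × ℝ => 𝓟 (Nbhd p.1 p.2 w)) ⁻¹'o (· ≥ ·))
      (𝓑 ×ˢ Ioi 0) := by
    rintro ⟨B₁, δ₁⟩ ⟨h₁, hδ₁⟩ ⟨B₂, δ₂⟩ ⟨h₂, hδ₂⟩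
    refine ⟨(B₁ ∪ B₂, min δ₁ δ₂), ⟨h𝓑.union_mem h₁ h₂, mem_Ioi.2 (lt_min hδ₁ hδ₂)⟩,
      principal_mono.2 ?_, principal_mono.2 ?_⟩
    · exact fun g hg x hx => (hg x (.inl hx)).trans_le (min_le_left _ _)
    · exact fun g hg x hx => (hg x (.inr hx)).trans_le (min_le_right _ _)
  obtain ⟨⟨B, δ⟩, ⟨hB, hδ⟩, hBN⟩ :=
    (mem_biInf_of_directed hdir (h𝓑.1.prod nonempty_Ioi)).1 (hle hN)
  exact ⟨B, hB, δ, hδ, hBN⟩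

theorem mem_closure_of_forall_nbhd (h𝓑 : IsPBornology 𝓑) (hfin : ∀ B ∈ 𝓑, B.Finite)
    {A : Set (X → ℝ)} {w : X → ℝ} (H : ∀ B ∈ 𝓑, ∀ δ > 0, ∃ a ∈ A, a ∈ Nbhd B δ w) :
    w ∈ closure[tauB 𝓑] A := by
  let := tauB 𝓑
  refine mem_closure_iff_nhds.2 fun N hN => ?_
  obtain ⟨B, hB, δ, hδ, hBN⟩ := exists_nbhd_subset_of_mem_nhds h𝓑 hfin hN
  obtain ⟨a, haA, ha⟩ := H B hB δ hδ
  exact ⟨a, hBN ha, haA⟩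

theorem continuous_add_right_tauB (d : X → ℝ) : Continuous[tauB 𝓑, tauB 𝓑] (· + d) := by
  refine continuous_generateFrom_iff.2 ?_
  rintro _ ⟨h, B, ε, hB, hε, rfl⟩
  convert isOpen_nbhd hB hε (h - d) using 1
  ext g
  show (∀ x ∈ B, _) ↔ ∀ x ∈ B, _
  refine forall₂_congr fun x _ => ?_
  simp only [Pi.add_apply, Pi.sub_apply, sub_sub, add_comm (d x)]

theorem add_mem_closure_image_add {A : Set (X → ℝ)} {w : X → ℝ}
    (hw : w ∈ closure[tauB 𝓑] A) (d : X → ℝ) :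
    w + d ∈ closure[tauB 𝓑] ((· + d) '' A) := by
  let := tauB 𝓑
  exact image_closure_subset_closure_image (continuous_add_right_tauB d) ⟨w, hw, rfl⟩

end TauB

section Pointwise

variable {X : Type*}

theorem fUg_eq_add_indicator (U : Set X) (g : X → ℝ) :
    fUg U g = g + Uᶜ.indicator (fun _ => 1 + ⨆ y, |g y|) := by
  ext x
  by_cases hx : x ∈ U <;> simp [fUg, hx, add_assoc]

theorem one_add_iSup_abs_nonneg (g : X → ℝ) : 0 ≤ 1 + ⨆ y, |g y| :=
  add_nonneg zero_le_one (Real.iSup_nonneg fun _ => abs_nonneg _)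

theorem fUg_eqOn (U : Set X) (g : X → ℝ) : EqOn (fUg U g) g U := fun x hx => by
  simp [fUg, hx]

theorem le_fUg (U : Set X) (g : X → ℝ) : g ≤ fUg U g := by
  rw [fUg_eq_add_indicator]
  exact le_add_of_nonneg_right (indicator_nonneg fun _ _ => one_add_iSup_abs_nonneg g)

theorem piecewise_indicator_mem_Icc {B C : Set X} [DecidablePred (· ∈ B)] {d : X → ℝ} {M : ℝ}
    (hd : ∀ x, d x ∈ Icc 0 M) (hM : 0 ≤ M) (x : X) :
    B.piecewise d (C.indicator fun _ => M) x ∈ Icc 0 M := by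
  by_cases hx : x ∈ B
  · simpa [hx] using hd x
  · by_cases hxC : x ∈ C <;> simp [hx, hxC, hM]

end Pointwise

section USCb

variable {X : Type*} [TopologicalSpace X]

theorem mem_USCb_iff {f : X → ℝ} :
    f ∈ USCb X ↔ UpperSemicontinuous f ∧ ∃ M, ∀ x, |f x| ≤ M := by
  rw [upperSemicontinuous_iff_isOpen_preimage]; rfl

theorem const_mem_USCb (c : ℝ) : (fun _ => c) ∈ USCb X :=
  mem_USCb_iff.2 ⟨upperSemicontinuous_const, |c|, fun _ => le_rfl⟩

theorem zero_mem_USCb : (0 : X → ℝ) ∈ USCb X := const_mem_USCb 0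

theorem add_mem_USCb {f g : X → ℝ} (hf : f ∈ USCb X) (hg : g ∈ USCb X) : f + g ∈ USCb X := by
  obtain ⟨hf, Mf, hMf⟩ := mem_USCb_iff.1 hf
  obtain ⟨hg, Mg, hMg⟩ := mem_USCb_iff.1 hg
  exact mem_USCb_iff.2
    ⟨hf.add hg, Mf + Mg, fun x => (abs_add_le _ _).trans (add_le_add (hMf x) (hMg x))⟩

theorem indicator_mem_USCb {s : Set X} (hs : IsClosed s) {c : ℝ} (hc : 0 ≤ c) :
    s.indicator (fun _ => c) ∈ USCb X := by
  refine mem_USCb_iff.2 ⟨hs.upperSemicontinuous_indicator hc, c, fun x => ?_⟩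
  by_cases hx : x ∈ s <;> simp [hx, abs_of_nonneg hc, hc]

theorem fUg_sub_mem_USCb {U : Set X} (hU : IsOpen U) {f g : X → ℝ} (hgf : g - f ∈ USCb X) :
    fUg U g - f ∈ USCb X := by
  rw [fUg_eq_add_indicator, add_sub_right_comm]
  exact add_mem_USCb hgf (indicator_mem_USCb hU.isClosed_compl (one_add_iSup_abs_nonneg g))

theorem fUg_mem_USCb {U : Set X} (hU : IsOpen U) {g : X → ℝ} (hg : g ∈ USCb X) :
    fUg U g ∈ USCb X := by
  simpa using fUg_sub_mem_USCb hU (f := 0) (by simpa using hg)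

theorem one_le_fUg {U : Set X} {g : X → ℝ} (hg : g ∈ USCb X) {x : X} (hx : x ∉ U) :
    1 ≤ fUg U g x := by
  obtain ⟨M, hM⟩ := hg.2
  have := le_ciSup (f := fun y => |g y|) ⟨M, by rintro _ ⟨y, rfl⟩; exact hM y⟩ x
  simp only [fUg, hx, if_false]
  linarith [neg_abs_le (g x)]

end USCb

section Discrete

variable {X : Type*} [TopologicalSpace X] [T1Space X]

theorem upperSemicontinuous_piecewise_indicator_closure {B : Set X} [DecidablePred (· ∈ B)]
    (hB : IsDiscrete B) {d : X → ℝ} {M : ℝ} (hd : ∀ x, d x ∈ Icc 0 M) (hM : 0 ≤ M) :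
    UpperSemicontinuous (B.piecewise d ((closure B).indicator fun _ => M)) := by
  set u := B.piecewise d ((closure B).indicator fun _ => M)
  have hu := piecewise_indicator_mem_Icc (B := B) (C := closure B) hd hM
  have hu0 : ∀ z ∉ closure B, u z = 0 := fun z hz => by
    simp [u, piecewise_eq_of_notMem _ _ _ fun h => hz (subset_closure h), hz]
  intro x y hy
  by_cases hxB : x ∈ B
  · obtain ⟨U, hU, hUB⟩ := isDiscrete_iff_forall_mem_exists_isOpen.1 hB x hxB
    have hclos : U ∩ closure B ⊆ {x} := hU.inter_closure.trans (by rw [hUB, closure_singleton])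
    filter_upwards [hU.mem_nhds (hUB.symm ▸ mem_singleton x : x ∈ U ∩ B).1] with x' hx'
    by_cases hx'c : x' ∈ closure B
    · obtain rfl := hclos ⟨hx', hx'c⟩
      exact hy
    · rw [hu0 x' hx'c]
      exact (hu x).1.trans_lt hy
  · by_cases hxc : x ∈ closure B
    · have : u x = M := by simp [u, hxB, hxc]
      exact Eventually.of_forall fun x' => (hu x').2.trans_lt (this ▸ hy)
    · filter_upwards [isClosed_closure.isOpen_compl.mem_nhds hxc] with x' hx'
      exact hu0 x' hx' ▸ hu0 x hxc ▸ hy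

theorem exists_USCb_eqOn_of_isDiscrete {B : Set X} (hB : IsDiscrete B)
    {d : X → ℝ} (hd : 0 ≤ d) {M : ℝ} (hdM : ∀ x, d x ≤ M) :
    ∃ u ∈ USCb X, 0 ≤ u ∧ EqOn u d B := by
  classical
  have hd' : ∀ x, d x ∈ Icc 0 (max M 0) := fun x => ⟨hd x, (hdM x).trans (le_max_left _ _)⟩
  have hu := piecewise_indicator_mem_Icc (B := B) (C := closure B) hd' (le_max_right _ _)
  refine ⟨_, mem_USCb_iff.2 ⟨upperSemicontinuous_piecewise_indicator_closure hB hd'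
    (le_max_right _ _), max M 0, fun x => (abs_of_nonneg (hu x).1).trans_le (hu x).2⟩,
    fun x => (hu x).1, fun x hx => piecewise_eq_of_mem _ _ _ hx⟩

theorem isDiscrete_of_USCb_subset_closure_contFns {𝓑 : Set (Set X)}
    (hdense : USCb X ⊆ closure[tauB 𝓑] (ContFns X)) {B : Set X} (hB : B ∈ 𝓑) : IsDiscrete B := by
  refine isDiscrete_iff_forall_mem_exists_isOpen.2 fun x hx => ?_
  obtain ⟨c, hc, hcB⟩ := exists_mem_nbhd_of_mem_closure
    (hdense (indicator_mem_USCb (isClosed_singleton (x := x)) zero_le_one)) hB one_half_pos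
  refine ⟨{y | 1 / 2 < c y}, isOpen_lt continuous_const hc, Set.ext fun y => ⟨?_, ?_⟩⟩
  · rintro ⟨hy, hyB⟩
    by_contra hyx
    have h : |({x} : Set X).indicator (fun _ => (1 : ℝ)) y - c y| < 1 / 2 := hcB y hyB
    rw [indicator_of_notMem hyx] at h
    linarith [(abs_lt.1 h).1, show 1 / 2 < c y from hy]
  · rintro rfl
    have h : |({y} : Set X).indicator (fun _ => (1 : ℝ)) y - c y| < 1 / 2 := hcB y hx
    rw [indicator_of_mem (mem_singleton y)] at h
    exact ⟨show 1 / 2 < c y by linarith [(abs_lt.1 h).2], hx⟩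

theorem Set.Countable.finite_of_powerset {α : Type*} {B : Set α} (h : (𝒫 B).Countable) :
    B.Finite := by
  by_contra hB
  obtain ⟨f, hf⟩ := Set.countable_iff_exists_injective.1 h
  let e := Set.Infinite.natEmbedding B hB
  refine Function.cantor_injective (fun A => f ⟨(fun n => (e n : α)) '' A, ?_⟩) fun A A' h => ?_
  · rintro _ ⟨n, -, rfl⟩; exact (e n).2
  · exact (Subtype.val_injective.comp e.injective).image_injective
      (congrArg Subtype.val (hf h))

/-- A dense subset of `USC*(X)` separates the subsets of `B` via the upper semicontinuous
extensions of their indicators, so it is at least as large as `𝒫 B`. -/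
theorem finite_of_separableIn {𝓑 : Set (Set X)} (hsep : SeparableIn (tauB 𝓑) (USCb X))
    {B : Set X} (hB : B ∈ 𝓑) (hBd : IsDiscrete B) : B.Finite := by
  obtain ⟨D, hDc, -, hD⟩ := hsep
  refine Set.Countable.finite_of_powerset <| (hDc.image fun c => {x ∈ B | 1 / 2 < c x}).mono ?_
  intro S hSB
  obtain ⟨u, hu, -, huS⟩ := exists_USCb_eqOn_of_isDiscrete hBd (d := S.indicator 1)
    (indicator_nonneg fun _ _ => zero_le_one) (indicator_le_self' fun _ _ => zero_le_one)
  obtain ⟨c, hcD, hc⟩ := exists_mem_nbhd_of_mem_closure (hD hu) hB one_half_pos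
  refine ⟨c, hcD, Set.ext fun x => ⟨fun ⟨hxB, hcx⟩ => ?_, fun hxS => ⟨hSB hxS, ?_⟩⟩⟩
  · by_contra hxS
    have := hc x hxB
    rw [huS hxB, indicator_of_notMem hxS] at this
    linarith [(abs_lt.1 this).1]
  · have := hc x (hSB hxS)
    rw [huS (hSB hxS), indicator_of_mem hxS, Pi.one_apply] at this
    linarith [(abs_lt.1 this).2]

end Discrete

namespace S1

variable {α : Type*} {𝒜 ℬ : Set (Set α)}

theorem mono_right (h : S1 𝒜 ℬ) {ℬ' : Set (Set α)} (hℬ : ℬ ⊆ ℬ') : S1 𝒜 ℬ' := fun u hu =>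
  let ⟨s, hs, hr⟩ := h u hu
  ⟨s, hs, hℬ hr⟩

theorem of_exists_subset (h : S1 𝒜 ℬ) {𝒜' : Set (Set α)} (H : ∀ A ∈ 𝒜', ∃ A₀ ∈ 𝒜, A₀ ⊆ A) :
    S1 𝒜' ℬ := by
  intro u hu
  choose A₀ hA₀ hA₀u using fun n => H _ (hu n)
  obtain ⟨s, hs, hr⟩ := h A₀ hA₀
  exact ⟨s, fun n => hA₀u n (hs n), hr⟩

end S1

section NbhdZero

variable {X : Type*} {B : Set X} {δ : ℝ} {f : X → ℝ}

theorem lt_of_mem_nbhd_zero (hf : f ∈ Nbhd B δ 0) {x : X} (hx : x ∈ B) : f x < δ := by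
  have := hf x hx
  rw [Pi.zero_apply, zero_sub, abs_neg] at this
  exact (le_abs_self _).trans_lt this

theorem mem_nbhd_zero_of_nonneg (hf : 0 ≤ f) (H : ∀ x ∈ B, f x < δ) : f ∈ Nbhd B δ 0 :=
  fun x hx => by rw [Pi.zero_apply, zero_sub, abs_neg, abs_of_nonneg (hf x)]; exact H x hx

end NbhdZero

section Covers

variable {X : Type*} [TopologicalSpace X] {𝓑 : Set (Set X)}

theorem mem_BOmegaCovers_of (h𝓑 : IsPBornology 𝓑) {𝒰 : Set (Set X)}
    (hopen : ∀ U ∈ 𝒰, IsOpen U) (huniv : univ ∉ 𝒰) (hω : ∀ B ∈ 𝓑, ∃ U ∈ 𝒰, B ⊆ U) :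
    𝒰 ∈ BOmegaCovers 𝓑 := by
  refine ⟨⟨hopen, eq_univ_of_forall fun x => ?_⟩, huniv, hω⟩
  obtain ⟨U, hU, hxU⟩ := hω {x} (h𝓑.singleton_mem x)
  exact ⟨U, hU, hxU rfl⟩

theorem isOpen_of_mem_cond (phi : Bool) {𝒰 : Set (Set X)}
    (h𝒰 : 𝒰 ∈ cond phi (BOmegaCovers 𝓑) (BGammaCovers 𝓑)) : ∀ U ∈ 𝒰, IsOpen U := by
  cases phi
  exacts [h𝒰.1.1, h𝒰.1.1]

/-- A selection accumulating at `0` is `< 1` on each `B ∈ 𝓑` at some index, and there the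
corresponding member of the cover contains `B`. -/
theorem S1_BOmegaCovers_of_S1 (h𝓑 : IsPBornology 𝓑) {𝒜 : Set (Set (Set X))}
    {ℱ : Set (Set (X → ℝ))} (h𝒜 : ∀ 𝒰 ∈ 𝒜, ∀ U ∈ 𝒰, IsOpen U)
    (Φ : Set (Set X) → Set (X → ℝ)) (hΦ : ∀ 𝒰 ∈ 𝒜, Φ 𝒰 ∈ ℱ)
    (hΦU : ∀ 𝒰, ∀ f ∈ Φ 𝒰, ∃ U ∈ 𝒰 \ {univ}, ∀ x ∉ U, 1 ≤ f x)
    (hS1 : S1 ℱ {F | (0 : X → ℝ) ∈ closure[tauB 𝓑] F}) : S1 𝒜 (BOmegaCovers 𝓑) := by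
  intro 𝒰 h𝒰
  obtain ⟨s, hs, h0⟩ := hS1 (fun n => Φ (𝒰 n)) fun n => hΦ _ (h𝒰 n)
  choose U hU hsU using fun n => hΦU (𝒰 n) (s n) (hs n)
  refine ⟨U, fun n => (hU n).1, mem_BOmegaCovers_of h𝓑 ?_ ?_ fun B hB => ?_⟩
  · rintro _ ⟨n, rfl⟩
    exact h𝒜 _ (h𝒰 n) _ (hU n).1
  · rintro ⟨n, hn⟩
    exact (hU n).2 hn
  · obtain ⟨_, ⟨n, rfl⟩, hn⟩ := exists_mem_nbhd_of_mem_closure h0 hB one_pos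
    exact ⟨U n, mem_range_self n, fun x hx => by_contra fun hxU =>
      (lt_of_mem_nbhd_zero hn hx).not_ge (hsU n x hxU)⟩

end Covers

section UpperDense

variable {X : Type*} [TopologicalSpace X] {𝓑 : Set (Set X)}

theorem exists_add_eqOn [T1Space X] {B : Set X} (hB : IsDiscrete B)
    {f w : X → ℝ} (hf : f ∈ USCb X) (hw : w ∈ USCb X) (hfw : f ≤ w) :
    ∃ u ∈ USCb X, 0 ≤ u ∧ EqOn (f + u) w B := by
  obtain ⟨Mf, hMf⟩ := hf.2
  obtain ⟨Mw, hMw⟩ := hw.2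
  obtain ⟨u, hu, hu0, huB⟩ := exists_USCb_eqOn_of_isDiscrete hB (d := w - f)
    (sub_nonneg.2 hfw) (M := Mw + Mf)
    fun x => by linarith [(abs_le.1 (hMw x)).2, (abs_le.1 (hMf x)).1, Pi.sub_apply w f x]
  exact ⟨u, hu, hu0, fun x hx => by simp [huB hx]⟩

theorem mem_UpperDenseFam_of_forall_eqOn (h𝓑 : IsPBornology 𝓑) {F : Set (X → ℝ)}
    (hF : F ⊆ USCb X)
    (H : ∀ f ∈ USCb X, ∀ w ∈ USCb X, f ≤ w → ∀ B ∈ 𝓑,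
      ∃ h ∈ F, f ≤ h ∧ h - f ∈ USCb X ∧ EqOn h w B) :
    F ∈ UpperDenseFam (tauB 𝓑) (USCb X) :=
  ⟨hF, fun f hf w ⟨hw, hfw⟩ => mem_closure_of_forall_eqOn h𝓑 fun B hB =>
    let ⟨h, hhF, hfh, hhf, hhw⟩ := H f hf w hw hfw B hB
    ⟨h, ⟨hhF, hfh, hhf⟩, hhw⟩⟩

theorem USCb_mem_UpperDenseFam [T1Space X] (h𝓑 : IsPBornology 𝓑)
    (hdisc : ∀ B ∈ 𝓑, IsDiscrete B) :
    USCb X ∈ UpperDenseFam (tauB 𝓑) (USCb X) := by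
  refine mem_UpperDenseFam_of_forall_eqOn h𝓑 subset_rfl fun f hf w hw hfw B hB => ?_
  obtain ⟨u, hu, hu0, hfu⟩ := exists_add_eqOn (hdisc B hB) hf hw hfw
  exact ⟨f + u, add_mem_USCb hf hu, le_add_of_nonneg_right hu0, by simpa using hu, hfu⟩

theorem USCb_mem_UpperSeqDenseFam : USCb X ∈ UpperSeqDenseFam (tauB 𝓑) (USCb X) :=
  ⟨subset_rfl, fun f hf => ⟨fun _ => f, fun _ => ⟨hf, le_rfl, by simpa using zero_mem_USCb⟩,
    by let := tauB 𝓑; exact tendsto_const_nhds⟩⟩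

theorem SU_subset_USCb {𝒰 : Set (Set X)} (hopen : ∀ U ∈ 𝒰, IsOpen U) : SU 𝒰 ⊆ USCb X := by
  rintro _ ⟨U, hU, g, hg, rfl⟩
  exact fUg_mem_USCb (hopen U hU) hg

theorem exists_one_le_of_mem_SU {𝒰 : Set (Set X)} {f : X → ℝ} (hf : f ∈ SU 𝒰) :
    ∃ U ∈ 𝒰, ∀ x ∉ U, 1 ≤ f x := by
  obtain ⟨U, hU, g, hg, rfl⟩ := hf
  exact ⟨U, hU, fun x hx => one_le_fUg hg hx⟩

theorem SU_mem_UpperDenseFam [T1Space X] (h𝓑 : IsPBornology 𝓑)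
    (hdisc : ∀ B ∈ 𝓑, IsDiscrete B) {𝒰 : Set (Set X)}
    (hopen : ∀ U ∈ 𝒰, IsOpen U) (hω : ∀ B ∈ 𝓑, ∃ U ∈ 𝒰, B ⊆ U) :
    SU 𝒰 ∈ UpperDenseFam (tauB 𝓑) (USCb X) := by
  refine mem_UpperDenseFam_of_forall_eqOn h𝓑 (SU_subset_USCb hopen)
    fun f hf w hw hfw B hB => ?_
  obtain ⟨U, hU, hBU⟩ := hω B hB
  obtain ⟨u, hu, hu0, hfu⟩ := exists_add_eqOn (hdisc B hB) hf hw hfw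
  exact ⟨fUg U (f + u), ⟨U, hU, f + u, add_mem_USCb hf hu, rfl⟩,
    (le_add_of_nonneg_right hu0).trans (le_fUg U _),
    fUg_sub_mem_USCb (hopen U hU) (by simpa using hu),
    fun x hx => (fUg_eqOn U _ (hBU hx)).trans (hfu hx)⟩

theorem SU_mem_UpperSeqDenseFam (h𝓑 : IsPBornology 𝓑) {𝒰 : Set (Set X)}
    (hopen : ∀ U ∈ 𝒰, IsOpen U) (hinf : 𝒰.Infinite)
    (hγ : ∀ B ∈ 𝓑, {U ∈ 𝒰 | ¬ B ⊆ U}.Finite) :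
    SU 𝒰 ∈ UpperSeqDenseFam (tauB 𝓑) (USCb X) := by
  refine ⟨SU_subset_USCb hopen, fun f hf => ?_⟩
  let e := hinf.natEmbedding
  refine ⟨fun j => fUg (e j) f, fun j => ⟨⟨e j, (e j).2, f, hf, rfl⟩, le_fUg _ f,
    fUg_sub_mem_USCb (hopen _ (e j).2) (by simpa using zero_mem_USCb)⟩,
    tendsto_of_forall_eventually_eqOn h𝓑 fun B hB => ?_⟩
  have hbad : {j | ¬ B ⊆ e j}.Finite :=
    ((hγ B hB).preimage (Subtype.val_injective.comp e.injective).injOn).subset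
      fun j hj => ⟨(e j).2, hj⟩
  rw [← Nat.cofinite_eq_atTop]
  exact (eventually_cofinite.2 hbad).mono fun j hj => (fUg_eqOn _ f).mono hj

theorem S1_BOmegaCovers_of_S1_upper_DFam [T1Space X] (h𝓑 : IsPBornology 𝓑)
    (hdisc : ∀ B ∈ 𝓑, IsDiscrete B) (phi : Bool)
    (h : S1 (cond phi (UpperDenseFam (tauB 𝓑) (USCb X)) (UpperSeqDenseFam (tauB 𝓑) (USCb X)))
      (DFam (tauB 𝓑) (USCb X))) :
    S1 (cond phi (BOmegaCovers 𝓑) (BGammaCovers 𝓑)) (BOmegaCovers 𝓑) := by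
  refine S1_BOmegaCovers_of_S1 h𝓑 (fun _ => isOpen_of_mem_cond phi) (fun 𝒰 => SU (𝒰 \ {univ})) ?_
    (fun _ _ hf => exists_one_le_of_mem_SU hf) (h.mono_right fun F hF => hF.2 zero_mem_USCb)
  cases phi
  · exact fun 𝒰 h𝒰 => SU_mem_UpperSeqDenseFam h𝓑 (fun U hU => h𝒰.1.1 U hU.1)
      (h𝒰.2.1.sdiff (finite_singleton _)) fun B hB =>
        (h𝒰.2.2 B hB).subset fun U hU => ⟨hU.1.1, hU.2⟩
  · intro 𝒰 h𝒰
    rw [sdiff_singleton_eq_self h𝒰.2.1]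
    exact SU_mem_UpperDenseFam h𝓑 hdisc h𝒰.1.1 h𝒰.2.2

end UpperDense

section Indicator

variable {X : Type*} [TopologicalSpace X] {𝓑 : Set (Set X)}

theorem image_indicator_compl_mem_OmegaFam (h𝓑 : IsPBornology 𝓑) {𝒰 : Set (Set X)}
    (h𝒰 : 𝒰 ∈ BOmegaCovers 𝓑) :
    (fun U => Uᶜ.indicator 1) '' 𝒰 ∈ OmegaFam 𝓑 (0 : X → ℝ) (USCb X) := by
  have hmem : ∀ U ∈ 𝒰, Uᶜ.indicator 1 ∈ USCb X := fun U hU =>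
    indicator_mem_USCb (h𝒰.1.1 U hU).isClosed_compl zero_le_one
  refine ⟨?_, ⟨?_, mem_closure_of_forall_eqOn h𝓑 fun B hB => ?_⟩, ?_⟩
  · rintro _ ⟨U, hU, rfl⟩
    exact hmem U hU
  · rintro ⟨U, hU, h0⟩
    refine h𝒰.2.1 (compl_empty_iff.1 (indicator_one_inj ℝ ?_) ▸ hU)
    rw [show Uᶜ.indicator 1 = 0 from h0, indicator_empty]
    rfl
  · obtain ⟨U, hU, hBU⟩ := h𝒰.2.2 B hB
    exact ⟨_, mem_image_of_mem _ hU, fun x hx => indicator_of_notMem (not_not.2 (hBU hx)) _⟩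
  · rintro _ ⟨U, hU, rfl⟩
    exact ⟨indicator_nonneg fun _ _ => zero_le_one, by simpa using hmem U hU⟩

theorem image_indicator_compl_mem_GammaFam {𝒰 : Set (Set X)} (hopen : ∀ U ∈ 𝒰, IsOpen U)
    (hinf : 𝒰.Infinite) (hγ : ∀ B ∈ 𝓑, {U ∈ 𝒰 | ¬ B ⊆ U}.Finite) :
    (fun U => Uᶜ.indicator 1) '' 𝒰 ∈ GammaFam 𝓑 (0 : X → ℝ) (USCb X) := by
  have hmem : ∀ U ∈ 𝒰, Uᶜ.indicator 1 ∈ USCb X := fun U hU =>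
    indicator_mem_USCb (hopen U hU).isClosed_compl zero_le_one
  refine ⟨?_, ⟨hinf.image fun U _ V _ h => compl_injective (indicator_one_inj ℝ h),
    fun ε hε B hB => ((hγ B hB).image fun U => Uᶜ.indicator 1).subset ?_⟩, ?_⟩
  · rintro _ ⟨U, hU, rfl⟩
    exact hmem U hU
  · rintro _ ⟨⟨U, hU, rfl⟩, x, hxB, hx⟩
    refine ⟨U, ⟨hU, fun hBU => ?_⟩, rfl⟩
    simp only [indicator_of_notMem (fun h : x ∈ Uᶜ => h (hBU hxB)), Pi.zero_apply, sub_zero,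
      abs_zero] at hx
    exact hε.not_ge hx
  · rintro _ ⟨U, hU, rfl⟩
    exact ⟨indicator_nonneg fun _ _ => zero_le_one, by simpa using hmem U hU⟩

theorem S1_BOmegaCovers_of_S1_OmegaFam (h𝓑 : IsPBornology 𝓑) (phi : Bool)
    (h : S1 (cond phi (OmegaFam 𝓑 (0 : X → ℝ) (USCb X)) (GammaFam 𝓑 (0 : X → ℝ) (USCb X)))
      (OmegaFam 𝓑 (0 : X → ℝ) (USCb X))) :
    S1 (cond phi (BOmegaCovers 𝓑) (BGammaCovers 𝓑)) (BOmegaCovers 𝓑) := by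
  refine S1_BOmegaCovers_of_S1 h𝓑 (fun _ => isOpen_of_mem_cond phi)
    (fun 𝒰 => (fun U => Uᶜ.indicator 1) '' (𝒰 \ {univ})) ?_ ?_
    (h.mono_right fun F hF => hF.2.1.2)
  · cases phi
    · exact fun 𝒰 h𝒰 => image_indicator_compl_mem_GammaFam (fun U hU => h𝒰.1.1 U hU.1)
        (h𝒰.2.1.sdiff (finite_singleton _)) fun B hB =>
          (h𝒰.2.2 B hB).subset fun U hU => ⟨hU.1.1, hU.2⟩
    · intro 𝒰 h𝒰
      rw [sdiff_singleton_eq_self h𝒰.2.1]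
      exact image_indicator_compl_mem_OmegaFam h𝓑 h𝒰
  · rintro 𝒰 _ ⟨U, hU, rfl⟩
    exact ⟨U, hU, fun x hx => by simp [hx]⟩

end Indicator

section SmallSelection

variable {X : Type*} {𝓑 : Set (Set X)}

theorem exists_selection_small_of_frequently {θ : ℕ → ℝ} (hθ : Tendsto θ atTop (𝓝 0))
    {T : ℕ → Set (X → ℝ)} (hT : ∀ q, (T q).Nonempty)
    (hfreq : ∃ᶠ q in atTop, ∃ w ∈ T q, ∀ x, w x < θ q) :
    ∃ σ : ℕ → X → ℝ, (∀ q, σ q ∈ T q) ∧ ∀ δ > 0, ∃ q, ∀ x, σ q x < δ := by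
  have : ∀ q, ∃ w ∈ T q, (∃ w ∈ T q, ∀ x, w x < θ q) → ∀ x, w x < θ q := fun q => by
    by_cases h : ∃ w ∈ T q, ∀ x, w x < θ q
    · obtain ⟨w, hw, hwθ⟩ := h
      exact ⟨w, hw, fun _ => hwθ⟩
    · exact ⟨(hT q).some, (hT q).some_mem, fun h' => absurd h' h⟩
  choose σ hσT hσ using this
  refine ⟨σ, hσT, fun δ hδ => ?_⟩
  obtain ⟨q, hq, hθq⟩ := (hfreq.and_eventually (hθ.eventually (gt_mem_nhds hδ))).exists
  exact ⟨q, fun x => (hσ q hq x).trans hθq⟩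

/-- The `B*`-trick: the point `y n` outside the selected sublevel set `V n` forces the member
of the selected cover containing `B ∪ {y n | n < K}` to have index at least `K`. -/
theorem exists_selection_small_of_eventually [TopologicalSpace X] (h𝓑 : IsPBornology 𝓑)
    {𝒜 : Set (Set (Set X))} (hS1 : S1 𝒜 (BOmegaCovers 𝓑)) {θ : ℕ → ℝ}
    (hθ : Tendsto θ atTop (𝓝 0)) {T : ℕ → Set (X → ℝ)} (hT : ∀ q, (T q).Nonempty) {N : ℕ}
    (hbig : ∀ q ≥ N, ∀ w ∈ T q, ∃ x, θ q ≤ w x)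
    (hcov : ∀ q ≥ N, (fun w => {x | w x < θ q}) '' T q ∈ 𝒜) :
    ∃ σ : ℕ → X → ℝ, (∀ q, σ q ∈ T q) ∧ ∀ B ∈ 𝓑, ∀ δ > 0, ∃ q, ∀ x ∈ B, σ q x < δ := by
  obtain ⟨V, hV, hVcov⟩ := hS1 (fun n => (fun w => {x | w x < θ (n + N)}) '' T (n + N))
    fun n => hcov _ (Nat.le_add_left N n)
  choose e he heV using hV
  choose y hy using fun n => hbig (n + N) (Nat.le_add_left N n) (e n) (he n)
  have hσ : ∀ q, ∃ w ∈ T q, ∀ n, n + N = q → w = e n := by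
    intro q
    by_cases hq : N ≤ q
    · obtain ⟨n, rfl⟩ := Nat.exists_eq_add_of_le' hq
      exact ⟨e n, he n, fun m hm => by rw [Nat.add_right_cancel hm]⟩
    · exact ⟨(hT q).some, (hT q).some_mem, fun n hn => absurd (hn ▸ Nat.le_add_left N n) hq⟩
  choose σ hσT hσe using hσ
  refine ⟨σ, hσT, fun B hB δ hδ => ?_⟩
  obtain ⟨K, hK⟩ := eventually_atTop.1 (hθ.eventually (gt_mem_nhds hδ))
  obtain ⟨_, ⟨m, rfl⟩, hm⟩ :=
    hVcov.2.2 (B ∪ y '' Iio K) (h𝓑.union_mem hB (h𝓑.finite_mem ((finite_Iio K).image y)))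
  rw [← heV m] at hm
  have hmK : K ≤ m := by
    by_contra! h
    exact (hy m).not_gt (hm (Or.inr ⟨m, h, rfl⟩))
  refine ⟨m + N, fun x hx => ?_⟩
  rw [hσe _ m rfl]
  exact (hm (Or.inl hx)).trans (hK _ (hmK.trans (Nat.le_add_right m N)))

theorem exists_selection_small [TopologicalSpace X] (h𝓑 : IsPBornology 𝓑)
    {𝒜 : Set (Set (Set X))} (hS1 : S1 𝒜 (BOmegaCovers 𝓑)) {θ : ℕ → ℝ}
    (hθ : Tendsto θ atTop (𝓝 0)) {T : ℕ → Set (X → ℝ)} (hT : ∀ q, (T q).Nonempty)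
    (hcov : ∀ q, (∀ w ∈ T q, ∃ x, θ q ≤ w x) → (fun w => {x | w x < θ q}) '' T q ∈ 𝒜) :
    ∃ σ : ℕ → X → ℝ, (∀ q, σ q ∈ T q) ∧ ∀ B ∈ 𝓑, ∀ δ > 0, ∃ q, ∀ x ∈ B, σ q x < δ := by
  by_cases hfreq : ∃ᶠ q in atTop, ∃ w ∈ T q, ∀ x, w x < θ q
  · obtain ⟨σ, hσT, hσ⟩ := exists_selection_small_of_frequently hθ hT hfreq
    exact ⟨σ, hσT, fun B _ δ hδ => let ⟨q, hq⟩ := hσ δ hδ; ⟨q, fun x _ => hq x⟩⟩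
  · obtain ⟨N, hN⟩ := eventually_atTop.1 (not_frequently.1 hfreq)
    have hbig : ∀ q ≥ N, ∀ w ∈ T q, ∃ x, θ q ≤ w x := fun q hq => by
      simpa only [not_exists, not_and, not_forall, not_lt] using hN q hq
    exact exists_selection_small_of_eventually h𝓑 hS1 hθ hT hbig fun q hq => hcov q (hbig q hq)

end SmallSelection

section OmegaFamSelection

variable {X : Type*} [TopologicalSpace X] {𝓑 : Set (Set X)}

theorem range_mem_OmegaFam (h𝓑 : IsPBornology 𝓑) (hfin : ∀ B ∈ 𝓑, B.Finite)
    {σ : ℕ → X → ℝ} (hσ : ∀ q, σ q ∈ USCb X) (hpos : ∀ q, 0 ≤ σ q) (hne : ∀ q, σ q ≠ 0)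
    (hsmall : ∀ B ∈ 𝓑, ∀ δ > 0, ∃ q, ∀ x ∈ B, σ q x < δ) :
    range σ ∈ OmegaFam 𝓑 (0 : X → ℝ) (USCb X) := by
  refine ⟨range_subset_iff.2 hσ, ⟨fun ⟨q, hq⟩ => hne q hq,
    mem_closure_of_forall_nbhd h𝓑 hfin fun B hB δ hδ => ?_⟩, ?_⟩
  · obtain ⟨q, hq⟩ := hsmall B hB δ hδ
    exact ⟨σ q, mem_range_self q, mem_nbhd_zero_of_nonneg (hpos q) hq⟩
  · rintro _ ⟨q, rfl⟩
    exact ⟨hpos q, by simpa using hσ q⟩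

theorem exists_selection_mem_OmegaFam (h𝓑 : IsPBornology 𝓑) (hfin : ∀ B ∈ 𝓑, B.Finite)
    {𝒜 : Set (Set (Set X))} (hS1 : S1 𝒜 (BOmegaCovers 𝓑)) {T : ℕ → Set (X → ℝ)}
    (hTsub : ∀ q, T q ⊆ USCb X) (hTpos : ∀ q, ∀ w ∈ T q, 0 ≤ w) (hT0 : ∀ q, 0 ∉ T q)
    (hT : ∀ q, (T q).Nonempty) {θ : ℕ → ℝ} (hθ : Tendsto θ atTop (𝓝 0))
    (hcov : ∀ q, (∀ w ∈ T q, ∃ x, θ q ≤ w x) → (fun w => {x | w x < θ q}) '' T q ∈ 𝒜) :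
    ∃ σ : ℕ → X → ℝ, (∀ q, σ q ∈ T q) ∧ range σ ∈ OmegaFam 𝓑 (0 : X → ℝ) (USCb X) := by
  obtain ⟨σ, hσT, hσ⟩ := exists_selection_small h𝓑 hS1 hθ hT hcov
  exact ⟨σ, hσT, range_mem_OmegaFam h𝓑 hfin (fun q => hTsub q (hσT q))
    (fun q => hTpos q _ (hσT q)) (fun q h => hT0 q (h ▸ hσT q)) hσ⟩

theorem image_sublevel_mem_BOmegaCovers (h𝓑 : IsPBornology 𝓑) {T : Set (X → ℝ)} {θ : ℝ}
    (hT : T ⊆ USCb X) (hsmall : ∀ B ∈ 𝓑, ∃ w ∈ T, ∀ x ∈ B, w x < θ)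
    (hbig : ∀ w ∈ T, ∃ x, θ ≤ w x) :
    (fun w => {x | w x < θ}) '' T ∈ BOmegaCovers 𝓑 := by
  refine mem_BOmegaCovers_of h𝓑 ?_ ?_ fun B hB => ?_
  · rintro _ ⟨w, hw, rfl⟩
    exact (hT hw).1 θ
  · rintro ⟨w, hw, hwU⟩
    obtain ⟨x, hx⟩ := hbig w hw
    have hwU : {x | w x < θ} = univ := hwU
    exact hx.not_gt (show x ∈ {x | w x < θ} from hwU ▸ mem_univ x)
  · obtain ⟨w, hw, hwB⟩ := hsmall B hB
    exact ⟨_, mem_image_of_mem _ hw, hwB⟩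

/-- The range is infinite because a sublevel set repeated for infinitely many `i` would contain
every point, against `hbig`. -/
theorem range_sublevel_mem_BGammaCovers {ι : Type*} [Infinite ι] (h𝓑 : IsPBornology 𝓑)
    {s : ι → X → ℝ} {θ : ℝ} (hs : ∀ i, s i ∈ USCb X) (hbig : ∀ i, ∃ x, θ ≤ s i x)
    (hsmall : ∀ B ∈ 𝓑, ∀ᶠ i in cofinite, ∀ x ∈ B, s i x < θ) :
    range (fun i => {x | s i x < θ}) ∈ BGammaCovers 𝓑 := by
  refine ⟨⟨?_, eq_univ_of_forall fun x => ?_⟩, fun hfin => ?_, fun B hB => ?_⟩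
  · rintro _ ⟨i, rfl⟩
    exact (hs i).1 θ
  · obtain ⟨i, hi⟩ := (hsmall {x} (h𝓑.singleton_mem x)).exists
    exact ⟨_, mem_range_self i, hi x rfl⟩
  · have := hfin.to_subtype
    obtain ⟨V, hV⟩ := Finite.exists_infinite_fiber (rangeFactorization fun i => {x | s i x < θ})
    obtain ⟨i₀, hi₀⟩ := (infinite_coe_iff.1 hV).nonempty
    obtain ⟨x, hx⟩ := hbig i₀
    obtain ⟨i, hiV, hix⟩ := ((frequently_cofinite_iff_infinite.2
      (infinite_coe_iff.1 hV)).and_eventually (hsmall {x} (h𝓑.singleton_mem x))).exists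
    have hfib : {y | s i y < θ} = {y | s i₀ y < θ} :=
      (congrArg Subtype.val hiV).trans (congrArg Subtype.val hi₀).symm
    exact hx.not_gt (show x ∈ {y | s i₀ y < θ} from hfib ▸ hix x rfl)
  · refine ((eventually_cofinite.1 (hsmall B hB)).image fun i => {x | s i x < θ}).subset ?_
    rintro _ ⟨⟨i, rfl⟩, hBi⟩
    exact ⟨i, fun h => hBi fun x hx => h x hx, rfl⟩

theorem image_sublevel_mem_BGammaCovers_of_mem_GammaFam (h𝓑 : IsPBornology 𝓑)
    {F : Set (X → ℝ)} (hF : F ∈ GammaFam 𝓑 (0 : X → ℝ) (USCb X)) {θ : ℝ} (hθ : 0 < θ)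
    (hbig : ∀ w ∈ F \ {0}, ∃ x, θ ≤ w x) :
    (fun w => {x | w x < θ}) '' (F \ {0}) ∈ BGammaCovers 𝓑 := by
  have := (hF.2.1.1.sdiff (finite_singleton 0)).to_subtype
  rw [image_eq_range]
  refine range_sublevel_mem_BGammaCovers h𝓑 (fun w => hF.1 w.2.1) (fun w => hbig w w.2)
    fun B hB => eventually_cofinite.2 ?_
  refine ((hF.2.1.2 θ hθ B hB).preimage Subtype.val_injective.injOn).subset ?_
  intro w hw
  obtain ⟨x, hxB, hx⟩ : ∃ x ∈ B, θ ≤ w.1 x := by simpa using hw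
  exact ⟨w.2.1, x, hxB, by simpa using hx.trans (le_abs_self _)⟩

end OmegaFamSelection

section FunctionSelection

variable {X : Type*} [TopologicalSpace X] {𝓑 : Set (Set X)}

theorem S1_OmegaFam_of_S1_BOmegaCovers (h𝓑 : IsPBornology 𝓑) (hfin : ∀ B ∈ 𝓑, B.Finite)
    (phi : Bool) (h : S1 (cond phi (BOmegaCovers 𝓑) (BGammaCovers 𝓑)) (BOmegaCovers 𝓑)) :
    S1 (cond phi (OmegaFam 𝓑 (0 : X → ℝ) (USCb X)) (GammaFam 𝓑 (0 : X → ℝ) (USCb X)))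
      (OmegaFam 𝓑 (0 : X → ℝ) (USCb X)) := by
  have hθ := tendsto_one_div_add_atTop_nhds_zero_nat (𝕜 := ℝ)
  cases phi
  · intro F hF
    obtain ⟨σ, hσ, hr⟩ := exists_selection_mem_OmegaFam h𝓑 hfin h (T := fun q => F q \ {0})
      (fun q => sdiff_subset.trans (hF q).1) (fun q w hw => ((hF q).2.2 w hw.1).1)
      (fun q h => h.2 rfl) (fun q => ((hF q).2.1.1.sdiff (finite_singleton 0)).nonempty) hθ
      fun q => image_sublevel_mem_BGammaCovers_of_mem_GammaFam h𝓑 (hF q) Nat.one_div_pos_of_nat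
    exact ⟨σ, fun q => (hσ q).1, hr⟩
  · intro F hF
    have hsmall : ∀ q, ∀ B ∈ 𝓑, ∃ w ∈ F q, ∀ x ∈ B, w x < 1 / ((q : ℝ) + 1) := fun q B hB =>
      let ⟨w, hw, hwB⟩ := exists_mem_nbhd_of_mem_closure (hF q).2.1.2 hB Nat.one_div_pos_of_nat
      ⟨w, hw, fun x hx => lt_of_mem_nbhd_zero hwB hx⟩
    exact exists_selection_mem_OmegaFam h𝓑 hfin h (fun q => (hF q).1)
      (fun q w hw => ((hF q).2.2 w hw).1) (fun q => (hF q).2.1.1)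
      (fun q => (@closure_nonempty_iff _ (tauB 𝓑) _).1 ⟨0, (hF q).2.1.2⟩) hθ
      fun q => image_sublevel_mem_BOmegaCovers h𝓑 (hF q).1 (hsmall q)

theorem sep_pos_mem_OmegaFam_of_mem_UpperDenseFam [T1Space X] [Nonempty X] (h𝓑 : IsPBornology 𝓑)
    (hfin : ∀ B ∈ 𝓑, B.Finite) {F : Set (X → ℝ)} (hF : F ∈ UpperDenseFam (tauB 𝓑) (USCb X)) :
    {h ∈ F | 0 ≤ h ∧ h ≠ 0} ∈ OmegaFam 𝓑 (0 : X → ℝ) (USCb X) := by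
  refine ⟨fun h hh => hF.1 hh.1, ⟨fun h0 => h0.2.2 rfl,
    mem_closure_of_forall_nbhd h𝓑 hfin fun B hB δ hδ => ?_⟩,
    fun h hh => ⟨hh.2.1, by simpa using hF.1 hh.1⟩⟩
  let x₀ := Classical.arbitrary X
  have hδ2 := half_pos hδ
  obtain ⟨e, ⟨heF, he0, -⟩, he⟩ := exists_mem_nbhd_of_mem_closure
    (hF.2 0 zero_mem_USCb ⟨indicator_mem_USCb (isClosed_singleton (x := x₀)) hδ2.le,
      indicator_nonneg fun _ _ => hδ2.le⟩)
    (h𝓑.union_mem hB (h𝓑.singleton_mem x₀)) hδ2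
  refine ⟨e, ⟨heF, he0, fun h => ?_⟩, mem_nbhd_zero_of_nonneg he0 fun x hx => ?_⟩
  · have := he x₀ (Or.inr rfl)
    rw [h, indicator_of_mem (mem_singleton x₀), Pi.zero_apply, sub_zero, abs_of_pos hδ2] at this
    exact this.false
  · have h1 := he x (Or.inl hx)
    have h2 := indicator_le_self' (s := {x₀}) (fun _ _ => hδ2.le) x
    linarith [(abs_lt.1 h1).1]

theorem S1_UpperSeqDenseFam_OmegaFam_of_S1_BGammaCovers [Nonempty X] (h𝓑 : IsPBornology 𝓑)
    (hfin : ∀ B ∈ 𝓑, B.Finite) (h : S1 (BGammaCovers 𝓑) (BOmegaCovers 𝓑)) :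
    S1 (UpperSeqDenseFam (tauB 𝓑) (USCb X)) (OmegaFam 𝓑 (0 : X → ℝ) (USCb X)) := by
  intro F hF
  set θ : ℕ → ℝ := fun q => 1 / ((q : ℝ) + 1)
  have hθ : ∀ q, 0 < θ q / 2 := fun q => half_pos Nat.one_div_pos_of_nat
  choose s hs hlim using fun q => (hF q).2 _ (const_mem_USCb (θ q / 2))
  have hpos : ∀ q j, 0 ≤ s q j := fun q j x => (hθ q).le.trans ((hs q j).2.1 x)
  have hcov : ∀ q, (∀ w ∈ range (s q), ∃ x, θ q ≤ w x) →
      (fun w => {x | w x < θ q}) '' range (s q) ∈ BGammaCovers 𝓑 := fun q hbig => by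
    rw [← range_comp]
    refine range_sublevel_mem_BGammaCovers h𝓑 (fun j => (hF q).1 (hs q j).1)
      (fun j => hbig _ (mem_range_self j)) fun B hB => ?_
    rw [Nat.cofinite_eq_atTop]
    refine ((hlim q).eventually_mem_nbhd hB (hθ q)).mono fun j hj x hx => ?_
    linarith [(abs_lt.1 (hj x hx)).1]
  obtain ⟨σ, hσ, hr⟩ := exists_selection_mem_OmegaFam h𝓑 hfin h (T := fun q => range (s q))
    (fun q => range_subset_iff.2 fun j => (hF q).1 (hs q j).1)
    (fun q => forall_mem_range.2 (hpos q))
    (fun q ⟨j, hj⟩ => (hθ q).not_ge (by simpa [hj] using (hs q j).2.1 (Classical.arbitrary X)))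
    (fun q => range_nonempty _) tendsto_one_div_add_atTop_nhds_zero_nat hcov
  exact ⟨σ, fun q => by obtain ⟨j, hj⟩ := hσ q; exact hj ▸ (hs q j).1, hr⟩

theorem S1_upper_OmegaFam_of_S1_BOmegaCovers [T1Space X] [Nonempty X] (h𝓑 : IsPBornology 𝓑)
    (hfin : ∀ B ∈ 𝓑, B.Finite) (phi : Bool)
    (h : S1 (cond phi (BOmegaCovers 𝓑) (BGammaCovers 𝓑)) (BOmegaCovers 𝓑)) :
    S1 (cond phi (UpperDenseFam (tauB 𝓑) (USCb X)) (UpperSeqDenseFam (tauB 𝓑) (USCb X)))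
      (OmegaFam 𝓑 (0 : X → ℝ) (USCb X)) := by
  cases phi
  · exact S1_UpperSeqDenseFam_OmegaFam_of_S1_BGammaCovers h𝓑 hfin h
  · exact (S1_OmegaFam_of_S1_BOmegaCovers h𝓑 hfin true h).of_exists_subset fun F hF =>
      ⟨_, sep_pos_mem_OmegaFam_of_mem_UpperDenseFam h𝓑 hfin hF, fun _ h => h.1⟩

end FunctionSelection

section Translation

variable {X : Type*} [TopologicalSpace X] {𝓑 : Set (Set X)}

theorem add_neg_mem_of_le {F : Set (X → ℝ)} {f d h : X → ℝ} (hf : f ∈ USCb X) (hh : h ∈ F)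
    (hle : f + d ≤ h) (hsub : h - (f + d) ∈ USCb X) :
    h + -d ∈ {g | g ∈ USCb X ∧ g + d ∈ F} ∧ f ≤ h + -d ∧ h + -d - f ∈ USCb X := by
  have h1 : h + -d - f = h - (f + d) := by abel
  have h2 : h + -d = h - (f + d) + f := by abel
  refine ⟨⟨h2 ▸ add_mem_USCb hsub hf, by simpa using hh⟩, fun x => ?_, h1 ▸ hsub⟩
  have := hle x
  simp only [Pi.add_apply, Pi.neg_apply] at this ⊢
  linarith

theorem preimage_add_mem_UpperDenseFam {F : Set (X → ℝ)}
    (hF : F ∈ UpperDenseFam (tauB 𝓑) (USCb X)) {d : X → ℝ} (hd : d ∈ USCb X) :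
    {g | g ∈ USCb X ∧ g + d ∈ F} ∈ UpperDenseFam (tauB 𝓑) (USCb X) := by
  let := tauB 𝓑
  refine ⟨fun g hg => hg.1, fun f hf w ⟨hw, hfw⟩ => ?_⟩
  have h := add_mem_closure_image_add (hF.2 (f + d) (add_mem_USCb hf hd)
    ⟨add_mem_USCb hw hd, add_le_add hfw le_rfl⟩) (-d)
  rw [add_neg_cancel_right] at h
  refine closure_mono ?_ h
  rintro _ ⟨h, ⟨hhF, hle, hsub⟩, rfl⟩
  exact add_neg_mem_of_le hf hhF hle hsub

theorem preimage_add_mem_UpperSeqDenseFam {F : Set (X → ℝ)}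
    (hF : F ∈ UpperSeqDenseFam (tauB 𝓑) (USCb X)) {d : X → ℝ} (hd : d ∈ USCb X) :
    {g | g ∈ USCb X ∧ g + d ∈ F} ∈ UpperSeqDenseFam (tauB 𝓑) (USCb X) := by
  refine ⟨fun g hg => hg.1, fun f hf => ?_⟩
  obtain ⟨s, hs, hlim⟩ := hF.2 (f + d) (add_mem_USCb hf hd)
  refine ⟨fun j => s j + -d, fun j => add_neg_mem_of_le hf (hs j).1 (hs j).2.1 (hs j).2.2, ?_⟩
  let := tauB 𝓑
  simpa [Function.comp_def] using ((continuous_add_right_tauB (-d)).tendsto (f + d)).comp hlim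

theorem preimage_add_mem_cond (phi : Bool) {F : Set (X → ℝ)}
    (hF : F ∈ cond phi (UpperDenseFam (tauB 𝓑) (USCb X)) (UpperSeqDenseFam (tauB 𝓑) (USCb X)))
    {d : X → ℝ} (hd : d ∈ USCb X) :
    {g | g ∈ USCb X ∧ g + d ∈ F} ∈
      cond phi (UpperDenseFam (tauB 𝓑) (USCb X)) (UpperSeqDenseFam (tauB 𝓑) (USCb X)) := by
  cases phi
  exacts [preimage_add_mem_UpperSeqDenseFam hF hd, preimage_add_mem_UpperDenseFam hF hd]

/-- Run the selection principle once for every member `d k` of a countable dense set, on the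
families translated by `d k`, and interleave the selections. -/
theorem S1_DFam_of_S1_OmegaFam (hsep : SeparableIn (tauB 𝓑) (USCb X))
    {𝒜 : Set (Set (X → ℝ))} (h𝒜 : ∀ F ∈ 𝒜, ∀ d ∈ USCb X, {g | g ∈ USCb X ∧ g + d ∈ F} ∈ 𝒜)
    (hS1 : S1 𝒜 (OmegaFam 𝓑 (0 : X → ℝ) (USCb X))) : S1 𝒜 (DFam (tauB 𝓑) (USCb X)) := by
  let := tauB 𝓑
  obtain ⟨D, hDc, hDsub, hD⟩ := hsep
  obtain ⟨d, rfl⟩ := hDc.exists_eq_range (closure_nonempty_iff.1 ⟨0, hD zero_mem_USCb⟩)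
  intro u hu
  choose v hv hv0 using fun k => hS1 (fun j => {g | g ∈ USCb X ∧ g + d k ∈ u (Nat.pair k j)})
    fun j => h𝒜 _ (hu _) _ (hDsub (mem_range_self k))
  refine ⟨fun n => v n.unpair.1 n.unpair.2 + d n.unpair.1, fun n => ?_, ?_, ?_⟩
  · simpa [Nat.pair_unpair] using (hv n.unpair.1 n.unpair.2).2
  · rintro _ ⟨n, rfl⟩
    exact add_mem_USCb (hv _ _).1 (hDsub (mem_range_self _))
  · refine hD.trans (closure_minimal ?_ isClosed_closure)
    rintro _ ⟨k, rfl⟩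
    have := add_mem_closure_image_add (hv0 k).2.1.2 (d k)
    rw [zero_add] at this
    refine closure_mono ?_ this
    rintro _ ⟨_, ⟨j, rfl⟩, rfl⟩
    exact ⟨Nat.pair k j, by simp [Nat.unpair_pair]⟩

theorem separableIn_of_S1_DFam {𝒜 : Set (Set (X → ℝ))}
    (hS1 : S1 𝒜 (DFam (tauB 𝓑) (USCb X))) (h : USCb X ∈ 𝒜) : SeparableIn (tauB 𝓑) (USCb X) :=
  let ⟨s, _, hs⟩ := hS1 (fun _ => USCb X) fun _ => h
  ⟨range s, countable_range s, hs⟩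

end Translation

/-- For `Φ ∈ {Ω, Γ}` (coded by the Boolean `phi`: `true ↦ Ω`, `false ↦ Γ`),
assuming `C*(X)` is countably dense in `⟨USC*(X), τ_𝓑⟩`, the four conditions (a)–(d) of
Theorem `PhiD1` are equivalent. -/
theorem statement5 {X : Type*} [TopologicalSpace X] [T2Space X] [Infinite X]
    (𝓑 : Set (Set X)) (h𝓑 : IsPBornology 𝓑) (phi : Bool)
    (hcd : ∀ f ∈ USCb X, ∃ G : Set (X → ℝ), G ⊆ Cb X ∧ G.Countable ∧
      f ∈ @closure _ (tauB 𝓑) G) :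
    List.TFAE
      [ -- (a)
        S1 (cond phi (UpperDenseFam (tauB 𝓑) (USCb X)) (UpperSeqDenseFam (tauB 𝓑) (USCb X)))
          (DFam (tauB 𝓑) (USCb X)),
        -- (b)
        SeparableIn (tauB 𝓑) (USCb X) ∧
          S1 (cond phi (BOmegaCovers 𝓑) (BGammaCovers 𝓑)) (BOmegaCovers 𝓑),
        -- (c)
        SeparableIn (tauB 𝓑) (USCb X) ∧
          S1 (cond phi (OmegaFam 𝓑 (0 : X → ℝ) (USCb X)) (GammaFam 𝓑 (0 : X → ℝ) (USCb X)))
            (OmegaFam 𝓑 (0 : X → ℝ) (USCb X)),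
        -- (d)
        SeparableIn (tauB 𝓑) (USCb X) ∧
          S1 (cond phi (UpperDenseFam (tauB 𝓑) (USCb X)) (UpperSeqDenseFam (tauB 𝓑) (USCb X)))
            (OmegaFam 𝓑 (0 : X → ℝ) (USCb X)) ] := by
  have hdisc : ∀ B ∈ 𝓑, IsDiscrete B :=
    fun B => isDiscrete_of_USCb_subset_closure_contFns fun f hf =>
      let ⟨_, hG, _, hfG⟩ := hcd f hf
      (@closure_mono _ (tauB 𝓑) _ _ fun g hg => (hG hg).1) hfG
  have hfin : SeparableIn (tauB 𝓑) (USCb X) → ∀ B ∈ 𝓑, B.Finite :=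
    fun hsep B hB => finite_of_separableIn hsep hB (hdisc B hB)
  have hUSCb : USCb X ∈
      cond phi (UpperDenseFam (tauB 𝓑) (USCb X)) (UpperSeqDenseFam (tauB 𝓑) (USCb X)) := by
    cases phi
    exacts [USCb_mem_UpperSeqDenseFam, USCb_mem_UpperDenseFam h𝓑 hdisc]
  tfae_have 1 → 2 := fun h =>
    ⟨separableIn_of_S1_DFam h hUSCb, S1_BOmegaCovers_of_S1_upper_DFam h𝓑 hdisc phi h⟩
  tfae_have 2 → 3 := fun ⟨hsep, h⟩ => ⟨hsep, S1_OmegaFam_of_S1_BOmegaCovers h𝓑 (hfin hsep) phi h⟩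
  tfae_have 3 → 2 := fun ⟨hsep, h⟩ => ⟨hsep, S1_BOmegaCovers_of_S1_OmegaFam h𝓑 phi h⟩
  tfae_have 2 → 4 := fun ⟨hsep, h⟩ =>
    ⟨hsep, S1_upper_OmegaFam_of_S1_BOmegaCovers h𝓑 (hfin hsep) phi h⟩
  tfae_have 4 → 1 := fun ⟨hsep, h⟩ =>
    S1_DFam_of_S1_OmegaFam hsep (fun _ hF _ hd => preimage_add_mem_cond phi hF hd) h
  tfae_finish
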